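/- arXiv:2505.00556 — 11 statements merged into one kernel-verified Lean document; each statement's English description precedes it below -/
import Mathlib

section
/- If F is a subfield of ℝ such that the field extension ℝ/F is finite (i.e., ℝ is a finite-dimensional vector space over F), then F = ℝ. -/
/-!
This is the Artin–Schreier argument. If a field `M` containing `√-1` had a proper finite
extension inside an algebraically closed field `L` of characteristic zero, the Galois group of
`L/M` would contain an element of some prime order `p`, whose fixed field `E` has `[L : E] = p`.
Then `E` contains the `p`-th roots of unity, so by Kummer theory `L = E(α)` with `α ^ p = a ∈ E`
and `a` not a `p`-th power in `E`. Taking `s ∈ L` with `s ^ p = α`, the norm gives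
`N(s) ^ p = N(α) = (-1) ^ (p + 1) a`, and since `-1` is a `p`-th power in `E`, so is `a`.
Hence `[L : K(√-1)] = 1`, so `[L : K] ≤ 2` for every `K` with `L/K` finite; for `K = F` and
`L = ℂ` this gives `2 [ℝ : F] = [ℂ : F] ≤ 2`.
-/

open Polynomial IntermediateField Module

theorem Algebra.norm_eq_of_adjoin_eq_top {K L : Type*} [Field K] [Field L] [Algebra K L]
    [FiniteDimensional K L] {x : L} (hx : K⟮x⟯ = ⊤) :
    Algebra.norm K x = (-1) ^ finrank K L * (minpoly K x).coeff 0 := by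
  have hint : IsIntegral K x := .of_finite K x
  let pb := PowerBasis.ofAdjoinEqTop hint
    ((adjoin_simple_eq_top_iff_of_isAlgebraic hint.isAlgebraic).mp hx)
  rw [pb.finrank]
  exact Algebra.PowerBasis.norm_gen_eq_coeff_zero_minpoly pb

section

variable {M L : Type*} [Field M] [Field L] [Algebra M L] [FiniteDimensional M L]

theorem IsPrimitiveRoot.exists_of_finrank_eq_prime {p : ℕ} (hp : p.Prime) (h : finrank M L = p)
    {ζ : L} (hζ : IsPrimitiveRoot ζ p) : ∃ z : M, IsPrimitiveRoot z p := by
  have hint : IsIntegral M ζ := .of_finite M ζ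
  have hdeg : finrank M M⟮ζ⟯ < p := by
    have hdvd : minpoly M ζ ∣ cyclotomic p M := minpoly.dvd M ζ (by
      simpa [aeval_def, eval₂_eq_eval_map] using hζ.isRoot_cyclotomic hp.pos)
    have := natDegree_le_of_dvd hdvd (cyclotomic_ne_zero p M)
    rw [natDegree_cyclotomic, Nat.totient_prime hp] at this
    rw [adjoin.finrank hint]
    have := hp.pos
    omega
  have hbot : M⟮ζ⟯ = ⊥ := by
    have hdvd : finrank M M⟮ζ⟯ ∣ p := h ▸ ⟨_, (finrank_mul_finrank M M⟮ζ⟯ L).symm⟩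
    exact finrank_eq_one_iff.mp (((Nat.dvd_prime hp).mp hdvd).resolve_right hdeg.ne)
  obtain ⟨z, hz⟩ := mem_bot.mp (hbot ▸ mem_adjoin_simple_self M ζ)
  exact ⟨z, (hz ▸ hζ).of_map_of_injective (algebraMap M L).injective⟩

theorem IsGalois.of_isAlgClosed [IsAlgClosed L] [CharZero M] : IsGalois M L :=
  have : IsAlgClosure M L := ⟨inferInstance, Algebra.IsAlgebraic.of_finite M L⟩
  ⟨⟩

theorem IsAlgClosed.finrank_ne_prime [IsAlgClosed L] [CharZero M] {p : ℕ} (hp : p.Prime)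
    (hneg : ∃ c : M, c ^ p = -1) : finrank M L ≠ p := by
  intro hrank
  have : CharZero L := charZero_of_injective_algebraMap (algebraMap M L).injective
  have : IsGalois M L := .of_isAlgClosed
  have : Fact p.Prime := ⟨hp⟩
  have : IsCyclic Gal(L/M) :=
    isCyclic_of_prime_card (p := p) (by rw [IsGalois.card_aut_eq_finrank, hrank])
  obtain ⟨ζ, hζ⟩ := HasEnoughRootsOfUnity.exists_primitiveRoot L p
  obtain ⟨z, hz⟩ := hζ.exists_of_finrank_eq_prime hp hrank
  obtain ⟨α, ⟨a, ha⟩, hα⟩ := exists_root_adjoin_eq_top_of_isCyclic M L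
    ⟨z, (mem_primitiveRoots (hrank ▸ hp.pos)).mpr (hrank ▸ hz)⟩
  have hirr := irreducible_X_pow_sub_C_of_root_adjoin_eq_top ha.symm hα
  rw [hrank] at hirr ha
  have hmin : minpoly M α = X ^ p - C a :=
    (minpoly.eq_of_irreducible_of_monic hirr (by simp [ha]) (monic_X_pow_sub_C a hp.ne_zero)).symm
  have hnorm : Algebra.norm M α = (-1) ^ p * -a := by
    simp [Algebra.norm_eq_of_adjoin_eq_top hα, hrank, hmin, coeff_X_pow, hp.ne_zero.symm]
  obtain ⟨s, hs⟩ := IsAlgClosed.exists_pow_nat_eq α hp.pos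
  obtain ⟨c, hc⟩ := hneg
  refine pow_ne_of_irreducible_X_pow_sub_C hirr dvd_rfl hp.ne_one (-c * Algebra.norm M s) ?_
  rw [mul_pow, ← map_pow, hs, hnorm, neg_pow, hc]
  linear_combination a * (even_two_mul p).neg_one_pow (α := M)

theorem IsAlgClosed.finrank_eq_one_of_isSquare_neg_one [IsAlgClosed L] [CharZero M]
    (hsq : IsSquare (-1 : M)) : finrank M L = 1 := by
  by_contra hne
  set p := (finrank M L).minFac
  have hp : p.Prime := Nat.minFac_prime hne
  have : IsGalois M L := .of_isAlgClosed
  have : Fact p.Prime := ⟨hp⟩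
  obtain ⟨σ, hσ⟩ := exists_prime_orderOf_dvd_card' (G := Gal(L/M)) p
    (by rw [IsGalois.card_aut_eq_finrank]; exact Nat.minFac_dvd _)
  let E := fixedField (Subgroup.zpowers σ)
  have hE : finrank E L = p := by
    rw [finrank_fixedField_eq_card, Nat.card_zpowers, hσ]
  have hneg : ∃ c : E, c ^ p = -1 := by
    obtain ⟨j, hj⟩ := hsq
    rcases hp.eq_two_or_odd' with h2 | hodd
    · exact ⟨algebraMap M E j, by rw [h2, sq, ← map_mul, ← hj, map_neg, map_one]⟩
    · exact ⟨-1, hodd.neg_one_pow⟩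
  exact IsAlgClosed.finrank_ne_prime hp hneg hE

theorem IsAlgClosed.finrank_le_two [IsAlgClosed L] [CharZero M] : finrank M L ≤ 2 := by
  obtain ⟨i, hi⟩ := IsAlgClosed.exists_pow_nat_eq (-1 : L) two_pos
  have hdeg : finrank M M⟮i⟯ ≤ 2 := by
    rw [adjoin.finrank (.of_finite M i)]
    have hdvd : minpoly M i ∣ X ^ 2 + C 1 := minpoly.dvd M i (by simp [hi])
    simpa only [natDegree_X_pow_add_C] using
      natDegree_le_of_dvd hdvd (monic_X_pow_add_C (1 : M) two_ne_zero).ne_zero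
  have hsq : IsSquare (-1 : M⟮i⟯) := ⟨AdjoinSimple.gen M i, Subtype.ext (by simp [← sq, hi])⟩
  rw [← finrank_mul_finrank M M⟮i⟯ L, finrank_eq_one_of_isSquare_neg_one hsq, mul_one]
  exact hdeg

end

theorem stmt_1 (F : Subfield ℝ) (h : Module.Finite F ℝ) : F = ⊤ := by
  have : FiniteDimensional F ℂ := Module.Finite.trans ℝ ℂ
  have hℂ : finrank F ℂ = finrank F ℝ * 2 := by
    rw [← finrank_mul_finrank F ℝ ℂ, Complex.finrank_real_complex]
  have hℝ : finrank F ℝ = 1 := by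
    have := IsAlgClosed.finrank_le_two (M := F) (L := ℂ)
    have : 0 < finrank F ℝ := finrank_pos
    omega
  refine eq_top_iff.mpr fun x _ => ?_
  obtain ⟨y, rfl⟩ := (Algebra.finrank_eq_one_iff_bijective_algebraMap.mp hℝ).surjective x
  exact y.2
end

section
/- If A is a subring of ℝ and there exists x ∈ ℝ such that A + x·A = ℝ (where A + x·A = {a + x·b : a, b ∈ A}), then A = ℝ. -/
/-! The equality `A + x·A = ℝ` makes `ℝ` a finite `A`-module, so `ℝ` is integral over `A` and
`A` is a field with `[ℝ : A] ≤ 2`. A quadratic extension in characteristic zero is Galois, which is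
impossible here because `ℝ` has no nontrivial ring endomorphisms; hence `[ℝ : A] = 1`. -/

open Module

theorem Real.finrank_ne_two (K : Type*) [Field K] [Algebra K ℝ] : finrank K ℝ ≠ 2 := by
  intro h
  have : Algebra.IsQuadraticExtension K ℝ := ⟨h⟩
  have : CharZero K := (algebraMap K ℝ).charZero
  have : FiniteDimensional K ℝ := Module.finite_of_finrank_eq_succ h
  have : Subsingleton Gal(ℝ/K) :=
    ⟨fun e₁ e₂ => AlgEquiv.ext (RingHom.congr_fun (Subsingleton.elim (e₁ : ℝ →+* ℝ) e₂))⟩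
  have hcard := IsGalois.card_aut_eq_finrank K ℝ
  rw [Nat.card_unique] at hcard
  omega

theorem Subring.isField_of_finite {L : Type*} [Field L] (A : Subring L) [Module.Finite A L] :
    IsField A :=
  have : Algebra.IsIntegral A L := .of_finite A L
  isField_of_isIntegral_of_isField Subtype.val_injective (Field.toIsField L)

theorem stmt_2 (A : Subring ℝ) (x : ℝ)
    (h : {z : ℝ | ∃ a ∈ A, ∃ b ∈ A, z = a + x * b} = Set.univ) :
    A = ⊤ := by
  have hspan : Submodule.span A {1, x} = ⊤ := by
    refine Submodule.eq_top_iff'.2 fun z => Submodule.mem_span_pair.2 ?_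
    obtain ⟨a, ha, b, hb, rfl⟩ := h.symm ▸ Set.mem_univ z
    exact ⟨⟨a, ha⟩, ⟨b, hb⟩, by simp [Subring.smul_def, mul_comm]⟩
  have : Module.Finite A ℝ := ⟨⟨{1, x}, by simpa using hspan⟩⟩
  let := A.isField_of_finite.toField
  have hle : finrank A ℝ ≤ 2 := by
    have := finrank_span_le_card (R := A) ({1, x} : Set ℝ)
    rw [hspan, finrank_top, Set.toFinset_insert, Set.toFinset_singleton] at this
    exact this.trans Finset.card_le_two
  have hpos : 0 < finrank A ℝ := Module.finrank_pos
  have hone : finrank A ℝ = 1 := by have := Real.finrank_ne_two A; omega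
  refine eq_top_iff.2 fun w _ => ?_
  obtain ⟨c, rfl⟩ := (finrank_eq_one_iff_of_nonzero' (1 : ℝ) one_ne_zero).1 hone w
  simp [Subring.smul_def]
end

section
/- If A is an additive subgroup of ℝ, p is a rational number, and A + p·A = ℝ, then A = ℝ. -/
theorem AddSubgroup.den_mul_add_rat_mul_mem {K : Type*} [DivisionRing K] [CharZero K]
    (A : AddSubgroup K) (p : ℚ) {a b : K} (ha : a ∈ A) (hb : b ∈ A) :
    (p.den : K) * (a + p * b) ∈ A := by
  have hden : (p.den : K) * p = p.num := by
    exact_mod_cast congrArg (Rat.cast : ℚ → K) (Rat.den_mul_eq_num p)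
  have hsplit : (p.den : K) * (a + p * b) = (p.den : ℤ) • a + p.num • b := by
    rw [mul_add, ← mul_assoc, hden, zsmul_eq_mul, zsmul_eq_mul, Int.cast_natCast]
  rw [hsplit]
  exact A.add_mem (A.zsmul_mem ha _) (A.zsmul_mem hb _)

theorem stmt_4 (A : AddSubgroup ℝ) (p : ℚ)
    (h : {z : ℝ | ∃ a ∈ A, ∃ b ∈ A, z = a + (p : ℝ) * b} = Set.univ) :
    A = ⊤ := by
  refine (AddSubgroup.eq_top_iff' A).2 fun y => ?_
  obtain ⟨a, ha, b, hb, hab⟩ : y / p.den ∈ {z : ℝ | ∃ a ∈ A, ∃ b ∈ A, z = a + (p : ℝ) * b} :=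
    h ▸ Set.mem_univ _
  have hy : y = p.den * (a + p * b) := by
    rw [← hab, mul_div_cancel₀ _ (Nat.cast_ne_zero.2 p.den_ne_zero)]
  exact hy ▸ A.den_mul_add_rat_mul_mem p ha hb
end

section
/- If A is an additive subgroup of ℝ, x ∈ ℝ, and A + x·A = ℝ, then for every positive integer m, A + (m·x)·A = ℝ. -/
theorem exists_add_natCast_mul_mul_of_forall_exists_add_mul {K : Type*} [DivisionRing K]
    {A : AddSubgroup K} {x : K} (hA : ∀ z, ∃ a ∈ A, ∃ b ∈ A, z = a + x * b)
    {n : ℕ} (hn : (n : K) ≠ 0) (z : K) :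
    ∃ a ∈ A, ∃ b ∈ A, z = a + (n * x) * b := by
  obtain ⟨a, ha, b, hb, hab⟩ := hA ((n : K)⁻¹ * z)
  refine ⟨n * a, by simpa only [nsmul_eq_mul] using A.nsmul_mem ha n, b, hb, ?_⟩
  calc z = n * ((n : K)⁻¹ * z) := (mul_inv_cancel_left₀ hn z).symm
    _ = n * a + n * x * b := by rw [hab, mul_add, mul_assoc]

theorem stmt_8 (A : AddSubgroup ℝ) (x : ℝ)
    (h : {z : ℝ | ∃ a ∈ A, ∃ b ∈ A, z = a + x * b} = Set.univ)
    (m : ℕ) (hm : 0 < m) :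
    {z : ℝ | ∃ a ∈ A, ∃ b ∈ A, z = a + ((m : ℝ) * x) * b} = Set.univ :=
  Set.eq_univ_of_forall <|
    exists_add_natCast_mul_mul_of_forall_exists_add_mul (Set.eq_univ_iff_forall.mp h)
      (Nat.cast_ne_zero.mpr hm.ne')
end

section
/- If A is an additive subgroup of ℝ, x ∈ ℝ, and A + x·A = ℝ, then for every rational number q, A + (x + q)·A = ℝ. -/
/-!
Write `q = m / n`. Scaling an element `a + x b` of `A + x·A` by `n` gives
`n a + x (n b) = (n a - m b) + (x + q)(n b)`, an element of `A + (x + q)·A`;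
since every real is `n` times a real, `A + x·A = ℝ` forces `A + (x + q)·A = ℝ`.
-/

def addMulSet {K : Type*} [Field K] (A : AddSubgroup K) (y : K) : Set K :=
  {z | ∃ a ∈ A, ∃ b ∈ A, z = a + y * b}

theorem den_mul_mem_addMulSet_add_rat {K : Type*} [Field K] [CharZero K] (A : AddSubgroup K)
    (x : K) (q : ℚ) {z : K} (hz : z ∈ addMulSet A x) :
    (q.den : K) * z ∈ addMulSet A (x + q) := by
  obtain ⟨a, ha, b, hb, rfl⟩ := hz
  have hq : (q : K) * q.den = q.num := by exact_mod_cast q.mul_den_eq_num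
  refine ⟨(q.den : ℤ) • a - q.num • b, sub_mem (A.zsmul_mem ha _) (A.zsmul_mem hb _),
    (q.den : ℤ) • b, A.zsmul_mem hb _, ?_⟩
  simp only [zsmul_eq_mul, Int.cast_natCast]
  linear_combination -b * hq

theorem addMulSet_add_rat_eq_univ {K : Type*} [Field K] [CharZero K] (A : AddSubgroup K)
    (x : K) (h : addMulSet A x = Set.univ) (q : ℚ) : addMulSet A (x + q) = Set.univ := by
  refine Set.eq_univ_of_forall fun z => ?_
  have hden : (q.den : K) ≠ 0 := Nat.cast_ne_zero.mpr q.den_nz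
  rw [← mul_div_cancel₀ z hden]
  exact den_mul_mem_addMulSet_add_rat A x q (h ▸ Set.mem_univ _)

theorem stmt_9 (A : AddSubgroup ℝ) (x : ℝ)
    (h : {z : ℝ | ∃ a ∈ A, ∃ b ∈ A, z = a + x * b} = Set.univ)
    (q : ℚ) :
    {z : ℝ | ∃ a ∈ A, ∃ b ∈ A, z = a + (x + (q : ℝ)) * b} = Set.univ :=
  addMulSet_add_rat_eq_univ A x h q
end

section
/- There exists an F_σ additive subgroup A of ℝ and a real number x such that A has Lebesgue measure zero and A + x·A = ℝ. -/
/-!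
Write `‖y‖` for the distance from `y` to the nearest integer and let `A` be the set of reals with
`‖2 ^ 4 ^ (k + 1) * y‖ = O(2⁻ᵏ)`. It is a subgroup, the union over the implied constant of closed
sets, and null, because at level `k` the condition confines `y` mod 1 to a set of measure `O(2⁻ᵏ)`.

For `x = ∑ 2 ^ (-4 ^ i)`, the number `2 ^ 4 ^ j * x` exceeds an integer by some `εⱼ` with
`2 ^ (-3 * 4 ^ j) ≤ εⱼ ≤ 2 ^ (-j - 2)`, so the multiples `d * 2 ^ 4 ^ j * x` with `d * εⱼ ≤ 1`
reach every residue mod 1 up to `2 ^ (-j - 2)`. Choosing these digits greedily builds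
`b = ∑ cⱼ 2 ^ (-4 ^ (j + 2))` with `cⱼ ≤ 2 ^ 4 ^ (j + 1)`: the digits are so sparse that `b ∈ A`,
and each digit corrects `z - x * b` at the next scale, so `z - x * b ∈ A`.
-/

open Set Filter MeasureTheory Topology

noncomputable section

namespace AddCircle

variable {T : ℝ}

def decaySubgroup (q : ℕ → ℕ) (r : ℕ → ℝ) : AddSubgroup (AddCircle T) where
  carrier := ⋃ C : ℕ, {θ | ∀ k, ‖q k • θ‖ ≤ C * r k}
  zero_mem' := mem_iUnion.2 ⟨0, fun k => by simp⟩
  add_mem' := by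
    rintro θ φ hθ hφ
    obtain ⟨C, hC⟩ := mem_iUnion.1 hθ
    obtain ⟨D, hD⟩ := mem_iUnion.1 hφ
    refine mem_iUnion.2 ⟨C + D, fun k => ?_⟩
    calc ‖q k • (θ + φ)‖ ≤ ‖q k • θ‖ + ‖q k • φ‖ := by rw [nsmul_add]; exact norm_add_le _ _
      _ ≤ C * r k + D * r k := add_le_add (hC k) (hD k)
      _ = ((C + D : ℕ) : ℝ) * r k := by push_cast; ring
  neg_mem' := by
    rintro θ hθ
    obtain ⟨C, hC⟩ := mem_iUnion.1 hθ
    exact mem_iUnion.2 ⟨C, fun k => by rw [smul_neg, norm_neg]; exact hC k⟩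

theorem isClosed_setOf_forall_norm_nsmul_le (q : ℕ → ℕ) (ε : ℕ → ℝ) :
    IsClosed {θ : AddCircle T | ∀ k, ‖q k • θ‖ ≤ ε k} := by
  simp only [ofPred_forall]
  exact isClosed_iInter fun k => isClosed_le (by fun_prop) continuous_const

variable [hT : Fact (0 < T)]

theorem volume_setOf_norm_nsmul_le {n : ℕ} (hn : n ≠ 0) (ε : ℝ) :
    volume {θ : AddCircle T | ‖n • θ‖ ≤ ε} = ENNReal.ofReal (min T (2 * ε)) := by
  have h := Measure.measurePreserving_zsmul (volume : Measure (AddCircle T))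
    (n := (n : ℤ)) (by exact_mod_cast hn)
  have hpre : {θ : AddCircle T | ‖n • θ‖ ≤ ε} =
      (fun θ => (n : ℤ) • θ) ⁻¹' Metric.closedBall 0 ε := by
    ext θ; simp
  rw [hpre, h.measure_preimage measurableSet_closedBall.nullMeasurableSet, volume_closedBall]

theorem volume_setOf_forall_norm_nsmul_le {q : ℕ → ℕ} (hq : ∀ k, q k ≠ 0) {ε : ℕ → ℝ}
    (hε : Tendsto ε atTop (𝓝 0)) : volume {θ : AddCircle T | ∀ k, ‖q k • θ‖ ≤ ε k} = 0 := by
  have hlim : Tendsto (fun k => ENNReal.ofReal (min T (2 * ε k))) atTop (𝓝 0) := by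
    have h : Tendsto (fun k => min T (2 * ε k)) atTop (𝓝 (min T (2 * 0))) :=
      tendsto_const_nhds.min (hε.const_mul 2)
    simpa [hT.out.le] using ENNReal.tendsto_ofReal h
  refine le_antisymm (ge_of_tendsto' hlim fun k => ?_) zero_le
  rw [← volume_setOf_norm_nsmul_le (hq k)]
  exact measure_mono fun θ hθ => hθ k

theorem volume_decaySubgroup {q : ℕ → ℕ} (hq : ∀ k, q k ≠ 0) {r : ℕ → ℝ}
    (hr : Tendsto r atTop (𝓝 0)) :
    volume (decaySubgroup (T := T) q r : Set (AddCircle T)) = 0 :=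
  measure_iUnion_null fun C =>
    volume_setOf_forall_norm_nsmul_le hq (by simpa using hr.const_mul (C : ℝ))

theorem volume_preimage_coe {s : Set (AddCircle T)} (hs : volume s = 0) :
    volume (((↑) : ℝ → AddCircle T) ⁻¹' s) = 0 := by
  have hcover : ((↑) : ℝ → AddCircle T) ⁻¹' s ⊆
      ⋃ n : ℤ, (↑) ⁻¹' s ∩ Ioc (n • T) (n • T + T) := by
    intro y hy
    obtain ⟨n, hn⟩ := mem_iUnion.1 (iUnion_Ioc_zsmul hT.out ▸ mem_univ y)
    exact mem_iUnion.2 ⟨n, hy, by rwa [add_zsmul, one_zsmul] at hn⟩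
  refine measure_mono_null hcover (measure_iUnion_null fun n => ?_)
  rw [← Measure.restrict_apply' measurableSet_Ioc]
  exact (AddCircle.measurePreserving_mk T (n • T)).quasiMeasurePreserving.preimage_null hs

end AddCircle

theorem UnitAddCircle.norm_coe_le_abs_sub_intCast (t : ℝ) (n : ℤ) :
    ‖(t : UnitAddCircle)‖ ≤ |t - n| :=
  UnitAddCircle.norm_eq ▸ round_le t n

theorem two_pow_mul_half_pow_le {a b c : ℕ} (h : a + b ≤ c) :
    (2 : ℝ) ^ a * (1 / 2) ^ c ≤ (1 / 2) ^ b := by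
  calc (2 : ℝ) ^ a * (1 / 2) ^ c ≤ 2 ^ a * (1 / 2) ^ (a + b) :=
        mul_le_mul_of_nonneg_left (pow_le_pow_of_le_one (by norm_num) (by norm_num) h)
          (by positivity)
    _ = (1 / 2) ^ b := by rw [pow_add, ← mul_assoc, ← mul_pow]; norm_num

theorem two_pow_mul_half_pow_of_le {a b : ℕ} (h : b ≤ a) :
    (2 : ℝ) ^ a * (1 / 2) ^ b = 2 ^ (a - b) := by
  rw [← Nat.sub_add_cancel h, pow_add, Nat.add_sub_cancel, mul_assoc, ← mul_pow]; norm_num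

theorem tsum_le_of_le_half_pow {f : ℕ → ℝ} (hf0 : ∀ i, 0 ≤ f i) (a : ℕ)
    (hf : ∀ i, f i ≤ (1 / 2) ^ (a + i)) : Summable f ∧ ∑' i, f i ≤ 2 * (1 / 2) ^ a := by
  have hgeom : HasSum (fun i => (1 / 2 : ℝ) ^ (a + i)) ((1 / 2) ^ a * 2) := by
    simp only [pow_add]; exact hasSum_geometric_two.mul_left _
  have hsum : Summable f := .of_nonneg_of_le hf0 hf hgeom.summable
  refine ⟨hsum, ?_⟩
  rw [mul_comm]
  exact hsum.tsum_le_of_sum_range_le fun n =>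
    (Finset.sum_le_sum fun i _ => hf i).trans (sum_le_hasSum _ (fun i _ => by positivity) hgeom)

theorem exists_nat_mul_near (t : ℝ) {ε : ℝ} (hε : 0 < ε) :
    ∃ d : ℕ, ∃ n : ℤ, d * ε ≤ 1 ∧ |t - d * ε - n| ≤ ε := by
  set d := ⌊Int.fract t / ε⌋₊
  have hlo : d * ε ≤ Int.fract t := (le_div_iff₀ hε).1 (Nat.floor_le (by positivity))
  have hhi : Int.fract t < (d + 1) * ε := (div_lt_iff₀ hε).1 (Nat.lt_floor_add_one _)
  refine ⟨d, ⌊t⌋, hlo.trans (Int.fract_lt_one t).le, abs_le.2 ⟨?_, ?_⟩⟩ <;>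
    linarith [Int.fract_add_floor t]

namespace LacunarySumset

def A : AddSubgroup ℝ :=
  (AddCircle.decaySubgroup (fun k => 2 ^ 4 ^ (k + 1)) fun k => (1 / 2 : ℝ) ^ k).comap
    (QuotientAddGroup.mk' (AddSubgroup.zmultiples (1 : ℝ)))

theorem coe_A :
    (A : Set ℝ) = ⋃ C : ℕ, ((↑) : ℝ → UnitAddCircle) ⁻¹'
      {θ | ∀ k, ‖2 ^ 4 ^ (k + 1) • θ‖ ≤ C * (1 / 2 : ℝ) ^ k} := by
  simp only [A, AddSubgroup.coe_comap, AddCircle.decaySubgroup, AddSubgroup.coe_set_mk,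
    AddSubmonoid.coe_set_mk, AddSubsemigroup.coe_set_mk, preimage_iUnion]
  rfl

theorem volume_A : volume (A : Set ℝ) = 0 :=
  AddCircle.volume_preimage_coe <| AddCircle.volume_decaySubgroup (fun k => by positivity)
    (tendsto_pow_atTop_nhds_zero_of_lt_one (by norm_num) (by norm_num))

theorem mem_A_of_forall_exists_int {y : ℝ}
    (h : ∀ k, ∃ n : ℤ, |2 ^ 4 ^ (k + 1) * y - n| ≤ (1 / 2 : ℝ) ^ k) : y ∈ A := by
  refine mem_iUnion.2 ⟨1, fun k => ?_⟩
  obtain ⟨n, hn⟩ := h k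
  have hcoe : 2 ^ 4 ^ (k + 1) • (y : UnitAddCircle) =
      ((2 ^ 4 ^ (k + 1) * y : ℝ) : UnitAddCircle) := by
    rw [← AddCircle.coe_nsmul, nsmul_eq_mul]; push_cast; rfl
  simpa [hcoe] using (UnitAddCircle.norm_coe_le_abs_sub_intCast _ n).trans hn

def x : ℝ := ∑' i : ℕ, (1 / 2 : ℝ) ^ 4 ^ i

theorem lt_four_pow (n : ℕ) : n < 4 ^ n := Nat.lt_pow_self (by norm_num)

theorem x_nonneg : 0 ≤ x := tsum_nonneg fun i => by positivity

theorem x_le_one : x ≤ 1 := by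
  have h := (tsum_le_of_le_half_pow (f := fun i => (1 / 2 : ℝ) ^ 4 ^ i) (fun i => by positivity)
    1 fun i => pow_le_pow_of_le_one (by norm_num) (by norm_num) (by linarith [lt_four_pow i])).2
  norm_num at h
  exact h

/-- Multiplying by `2 ^ 4 ^ j` turns the terms `i ≤ j` of `x` into integers; the rest is dominated
by its first term `2 ^ (4 ^ j - 4 ^ (j + 1))`. -/
theorem exists_two_pow_mul_x (j : ℕ) : ∃ P : ℤ, ∃ ε : ℝ,
    2 ^ 4 ^ j * x = P + ε ∧ (1 / 2) ^ (3 * 4 ^ j) ≤ ε ∧ ε ≤ (1 / 2) ^ (j + 2) := by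
  have hsum : Summable fun i : ℕ => (1 / 2 : ℝ) ^ 4 ^ i :=
    (tsum_le_of_le_half_pow (fun i => by positivity) 0
      fun i => pow_le_pow_of_le_one (by norm_num) (by norm_num) (by linarith [lt_four_pow i])).1
  set tail := ∑' i : ℕ, (1 / 2 : ℝ) ^ 4 ^ (i + (j + 1))
  have hsplit : x = ∑ i ∈ Finset.range (j + 1), (1 / 2 : ℝ) ^ 4 ^ i + tail :=
    (hsum.sum_add_tsum_nat_add (j + 1)).symm
  have hfour : 4 ^ (j + 1) = 4 ^ j + 3 * 4 ^ j := by ring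
  have htail_ge : (1 / 2 : ℝ) ^ 4 ^ (j + 1) ≤ tail := by
    have h := ((summable_nat_add_iff (j + 1)).2 hsum).le_tsum 0 (fun i _ => by positivity)
    rwa [zero_add] at h
  have hexp (i : ℕ) : 4 ^ (j + 1) + i ≤ 4 ^ (i + (j + 1)) := by
    have : (i + 1) * 4 ^ (j + 1) ≤ 4 ^ i * 4 ^ (j + 1) := by gcongr; exact lt_four_pow i
    rw [pow_add 4 i]; nlinarith [Nat.one_le_pow (j + 1) 4 (by norm_num)]
  have htail_le : tail ≤ 2 * (1 / 2) ^ 4 ^ (j + 1) :=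
    (tsum_le_of_le_half_pow (f := fun i => (1 / 2 : ℝ) ^ 4 ^ (i + (j + 1)))
      (fun i => by positivity) _ fun i =>
      pow_le_pow_of_le_one (by norm_num) (by norm_num) (hexp i)).2
  refine ⟨∑ i ∈ Finset.range (j + 1), 2 ^ (4 ^ j - 4 ^ i), 2 ^ 4 ^ j * tail, ?_, ?_, ?_⟩
  · rw [hsplit, mul_add, Finset.mul_sum]
    push_cast
    congr 1
    refine Finset.sum_congr rfl fun i hi => two_pow_mul_half_pow_of_le ?_
    exact Nat.pow_le_pow_right (by norm_num) (Finset.mem_range_succ_iff.1 hi)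
  · calc (1 / 2 : ℝ) ^ (3 * 4 ^ j) = 2 ^ 4 ^ j * (1 / 2) ^ 4 ^ (j + 1) := by
          rw [hfour, pow_add, ← mul_assoc, ← mul_pow]; norm_num
      _ ≤ 2 ^ 4 ^ j * tail := by gcongr
  · calc 2 ^ 4 ^ j * tail ≤ 2 * (2 ^ 4 ^ j * (1 / 2) ^ 4 ^ (j + 1)) := by
          nlinarith [pow_pos (two_pos : (0:ℝ) < 2) (4 ^ j)]
      _ ≤ 2 * (1 / 2) ^ (j + 3) := by
          gcongr; exact two_pow_mul_half_pow_le (by linarith [lt_four_pow j])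
      _ = (1 / 2) ^ (j + 2) := by ring

theorem exists_digit (j : ℕ) (t : ℝ) :
    ∃ c : ℕ, c ≤ 2 ^ 4 ^ (j + 1) ∧ ∃ n : ℤ, |t - x * c - n| ≤ (1 / 2) ^ (j + 2) := by
  obtain ⟨P, ε, hx, hε_ge, hε_le⟩ := exists_two_pow_mul_x j
  have hε : 0 < ε := lt_of_lt_of_le (by positivity) hε_ge
  obtain ⟨d, n, hdε, hn⟩ := exists_nat_mul_near t hε
  refine ⟨d * 2 ^ 4 ^ j, ?_, n - d * P, ?_⟩
  · have hd : (d : ℝ) ≤ 2 ^ (3 * 4 ^ j) := by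
      have h := (mul_le_mul_of_nonneg_left hε_ge d.cast_nonneg).trans hdε
      rwa [one_div_pow, ← div_eq_mul_one_div, div_le_one (by positivity)] at h
    calc d * 2 ^ 4 ^ j ≤ 2 ^ (3 * 4 ^ j) * 2 ^ 4 ^ j := by gcongr; exact_mod_cast hd
      _ = 2 ^ 4 ^ (j + 1) := by rw [← pow_add]; ring_nf
  · have hxc : x * ((d * 2 ^ 4 ^ j : ℕ) : ℝ) = d * P + d * ε := by
      push_cast; linear_combination (d : ℝ) * hx
    have hdP : t - (d * P + d * ε) - ((n - d * P : ℤ) : ℝ) = t - d * ε - n := by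
      push_cast; ring
    rw [hxc, hdP]
    exact hn.trans hε_le

variable (z : ℝ)

def digit (j : ℕ) (t : ℝ) : ℕ := (exists_digit j t).choose

/-- The digit added at step `j` brings `2 ^ 4 ^ (j + 2) * (z - x * partialSum z (j + 1))` within
`2 ^ (-j - 2)` of an integer; later digits do not disturb this, being much smaller. -/
def partialSum : ℕ → ℝ
  | 0 => 0
  | j + 1 => partialSum j +
      digit j (2 ^ 4 ^ (j + 2) * (z - x * partialSum j)) * (1 / 2) ^ 4 ^ (j + 2)

def b : ℝ := ∑' j, (partialSum z (j + 1) - partialSum z j)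

theorem two_pow_mul_partialSum_succ (j : ℕ) :
    2 ^ 4 ^ (j + 2) * partialSum z (j + 1) = 2 ^ 4 ^ (j + 2) * partialSum z j +
      digit j (2 ^ 4 ^ (j + 2) * (z - x * partialSum z j)) := by
  rw [partialSum, mul_add, mul_left_comm, ← mul_pow]; norm_num

theorem partialSum_succ_sub_nonneg (j : ℕ) : 0 ≤ partialSum z (j + 1) - partialSum z j := by
  rw [partialSum, add_sub_cancel_left]; positivity

theorem partialSum_succ_sub_le (j : ℕ) :
    partialSum z (j + 1) - partialSum z j ≤ (1 / 2) ^ (3 * 4 ^ (j + 1)) := by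
  rw [partialSum, add_sub_cancel_left]
  have hc : (digit j (2 ^ 4 ^ (j + 2) * (z - x * partialSum z j)) : ℝ) ≤ 2 ^ 4 ^ (j + 1) := by
    exact_mod_cast (exists_digit j _).choose_spec.1
  calc _ ≤ (2 : ℝ) ^ 4 ^ (j + 1) * (1 / 2) ^ 4 ^ (j + 2) := by gcongr
    _ ≤ (1 / 2) ^ (3 * 4 ^ (j + 1)) := two_pow_mul_half_pow_le (by ring_nf; rfl)

theorem exists_int_two_pow_mul_partialSum (k : ℕ) :
    ∃ N : ℤ, 2 ^ 4 ^ (k + 1) * partialSum z k = N := by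
  induction k with
  | zero => exact ⟨0, by simp [partialSum]⟩
  | succ k ih =>
    obtain ⟨N, hN⟩ := ih
    refine ⟨2 ^ (3 * 4 ^ (k + 1)) * N +
      digit k (2 ^ 4 ^ (k + 2) * (z - x * partialSum z k)), ?_⟩
    rw [two_pow_mul_partialSum_succ]
    push_cast
    rw [← hN, ← mul_assoc, ← pow_add]; ring_nf

theorem b_sub_partialSum (k : ℕ) :
    b z - partialSum z k = ∑' i, (partialSum z (i + k + 1) - partialSum z (i + k)) := by
  have hsum := (tsum_le_of_le_half_pow (partialSum_succ_sub_nonneg z) 0 fun j =>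
    (partialSum_succ_sub_le z j).trans (pow_le_pow_of_le_one (by norm_num) (by norm_num)
      (by linarith [lt_four_pow (j + 1)]))).1
  rw [b, ← hsum.sum_add_tsum_nat_add k, Finset.sum_range_sub, partialSum]
  ring

theorem partialSum_le_b (k : ℕ) : partialSum z k ≤ b z := by
  have h := b_sub_partialSum z k
  have : 0 ≤ b z - partialSum z k := h ▸ tsum_nonneg fun i => partialSum_succ_sub_nonneg z _
  linarith

theorem two_pow_mul_b_sub_partialSum_le (k : ℕ) :
    2 ^ 4 ^ (k + 1) * (b z - partialSum z k) ≤ (1 / 2) ^ (k + 1) := by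
  rw [b_sub_partialSum, ← tsum_mul_left]
  refine ((tsum_le_of_le_half_pow (fun i => mul_nonneg (by positivity)
    (partialSum_succ_sub_nonneg z _)) (k + 2) fun i => ?_).2).trans_eq (by ring)
  calc _ ≤ (2 : ℝ) ^ 4 ^ (k + 1) * (1 / 2) ^ (3 * 4 ^ (i + k + 1)) := by
        gcongr; exact partialSum_succ_sub_le z _
    _ ≤ (1 / 2) ^ (k + 2 + i) := by
        refine two_pow_mul_half_pow_le ?_
        have : 4 ^ (k + 1) ≤ 4 ^ (i + k + 1) := Nat.pow_le_pow_right (by norm_num) (by omega)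
        linarith [lt_four_pow (i + k + 1)]

theorem b_mem_A : b z ∈ A := by
  refine mem_A_of_forall_exists_int fun k => ?_
  obtain ⟨N, hN⟩ := exists_int_two_pow_mul_partialSum z k
  refine ⟨N, ?_⟩
  rw [← hN, ← mul_sub, abs_of_nonneg (mul_nonneg (by positivity)
    (sub_nonneg.2 (partialSum_le_b z k)))]
  exact (two_pow_mul_b_sub_partialSum_le z k).trans
    (pow_le_pow_of_le_one (by norm_num) (by norm_num) (by omega))

theorem sub_mul_b_mem_A : z - x * b z ∈ A := by
  refine mem_A_of_forall_exists_int fun k => ?_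
  cases k with
  | zero => exact ⟨round _, by simpa using (abs_sub_round _).trans (by norm_num)⟩
  | succ j =>
    set t := 2 ^ 4 ^ (j + 2) * (z - x * partialSum z j)
    obtain ⟨n, hn⟩ := (exists_digit j t).choose_spec.2
    refine ⟨n, ?_⟩
    have htail := two_pow_mul_b_sub_partialSum_le z (j + 1)
    have htail0 : 0 ≤ 2 ^ 4 ^ (j + 2) * (b z - partialSum z (j + 1)) :=
      mul_nonneg (by positivity) (sub_nonneg.2 (partialSum_le_b z _))
    have hsplit : 2 ^ 4 ^ (j + 1 + 1) * (z - x * b z) - n =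
        (t - x * digit j t - n) - x * (2 ^ 4 ^ (j + 2) * (b z - partialSum z (j + 1))) := by
      have := two_pow_mul_partialSum_succ z j
      simp only [t] at this ⊢
      linear_combination (-x) * this
    rw [hsplit]
    calc _ ≤ |t - x * digit j t - n| + |x * (2 ^ 4 ^ (j + 2) * (b z - partialSum z (j + 1)))| :=
          abs_sub _ _
      _ ≤ (1 / 2) ^ (j + 2) + 1 * (1 / 2) ^ (j + 2) := by
          rw [abs_mul, abs_of_nonneg x_nonneg, abs_of_nonneg htail0]
          exact add_le_add hn (mul_le_mul x_le_one htail htail0 zero_le_one)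
      _ = (1 / 2) ^ (j + 1) := by ring

end LacunarySumset

theorem stmt_11 :
    ∃ (A : AddSubgroup ℝ) (x : ℝ),
      (∃ f : ℕ → Set ℝ, (∀ n, IsClosed (f n)) ∧ (A : Set ℝ) = ⋃ n, f n) ∧
      MeasureTheory.volume (A : Set ℝ) = 0 ∧
      {z : ℝ | ∃ a ∈ A, ∃ b ∈ A, z = a + x * b} = Set.univ := by
  refine ⟨LacunarySumset.A, LacunarySumset.x, ⟨_, fun C => ?_, LacunarySumset.coe_A⟩,
    LacunarySumset.volume_A, ?_⟩
  · exact (AddCircle.isClosed_setOf_forall_norm_nsmul_le _ _).preimage continuous_quotient_mk'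
  · exact eq_univ_of_forall fun z => ⟨_, LacunarySumset.sub_mul_b_mem_A z, _,
      LacunarySumset.b_mem_A z, by ring⟩
end
end

section
/- Let A be an additive subgroup of ℝ and x ∈ ℝ with A + x·A = ℝ. Then for any subring R of ℝ containing A, R = ℝ. -/
/-!
If `R + R·x = ℝ` and some nonzero `i ∈ R` has `i·x ∈ R`, then `ℝ = i·ℝ ⊆ R`. Otherwise every real
number has a unique expression `r + s·x`, and writing `x² = α + β·x`, the substitution
`x ↦ β - x` (the other root of `X² - βX - α`) preserves squares of such expressions while sending
`y = 2x - β` to `-y`. Taking `w = r + s·x` with `w² = ±y > 0`, the conjugate of `w` would be a real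
number with negative square.
-/

theorem Subring.eq_top_of_forall_eq_add_mul {K : Type*} [Field K] {R : Subring K} {x i : K}
    (hspan : ∀ z, ∃ r ∈ R, ∃ s ∈ R, z = r + s * x) (hi : i ∈ R) (hi0 : i ≠ 0)
    (hix : i * x ∈ R) : R = ⊤ := by
  refine eq_top_iff.2 fun z _ => ?_
  obtain ⟨r, hr, s, hs, hz⟩ := hspan (z / i)
  have hz' : z = i * r + s * (i * x) :=
    calc z = i * (z / i) := (mul_div_cancel₀ z hi0).symm
      _ = i * r + s * (i * x) := by rw [hz]; ring
  exact hz' ▸ R.add_mem (R.mul_mem hi hr) (R.mul_mem hs hix)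

theorem Subring.exists_ne_zero_mul_mem_of_forall_eq_add_mul {R : Subring ℝ} {x : ℝ}
    (hspan : ∀ z, ∃ r ∈ R, ∃ s ∈ R, z = r + s * x) : ∃ i ∈ R, i ≠ 0 ∧ i * x ∈ R := by
  by_contra! hfree
  have coeff_eq_zero : ∀ s ∈ R, s * x ∈ R → s = 0 := fun s hs hsx =>
    by_contra fun hs0 => hfree s hs hs0 hsx
  have two_mem : (2 : ℝ) ∈ R := ofNat_mem R 2
  obtain ⟨α, hα, β, hβ, hx2⟩ := hspan (x * x)
  have hy : 2 * x - β ≠ 0 := fun hy =>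
    two_ne_zero (coeff_eq_zero 2 two_mem (by rwa [show 2 * x = β by linarith]))
  obtain ⟨ε, hε, hεy⟩ : ∃ ε ∈ R, 0 < ε * (2 * x - β) := by
    rcases hy.lt_or_gt with hneg | hpos
    · exact ⟨-1, R.neg_mem R.one_mem, by linarith⟩
    · exact ⟨1, R.one_mem, by linarith⟩
  obtain ⟨r, hr, c, hc, hw⟩ := hspan √(ε * (2 * x - β))
  have hw2 : (r + c * x) ^ 2 = ε * (2 * x - β) := hw ▸ Real.sq_sqrt hεy.le
  have hcoeff : 2 * r * c + c ^ 2 * β = 2 * ε := by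
    have hmem : (2 * r * c + c ^ 2 * β - 2 * ε) * x ∈ R := by
      rw [show (2 * r * c + c ^ 2 * β - 2 * ε) * x = -(ε * β) - r ^ 2 - c ^ 2 * α by
        linear_combination hw2 - c ^ 2 * hx2]
      exact R.sub_mem (R.sub_mem (R.neg_mem (R.mul_mem hε hβ)) (pow_mem hr 2))
        (R.mul_mem (pow_mem hc 2) hα)
    have := coeff_eq_zero _ (R.sub_mem (R.add_mem (R.mul_mem (R.mul_mem two_mem hr) hc)
      (R.mul_mem (pow_mem hc 2) hβ)) (R.mul_mem two_mem hε)) hmem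
    linarith
  have hconj : (r + c * (β - x)) ^ 2 = -(ε * (2 * x - β)) := by
    linear_combination hw2 + (β - 2 * x) * hcoeff
  nlinarith [sq_nonneg (r + c * (β - x))]

theorem stmt_13 (A : AddSubgroup ℝ) (x : ℝ)
    (h : {z : ℝ | ∃ a ∈ A, ∃ b ∈ A, z = a + x * b} = Set.univ)
    (R : Subring ℝ) (hAR : (A : Set ℝ) ⊆ (R : Set ℝ)) :
    R = ⊤ := by
  have hspan : ∀ z, ∃ r ∈ R, ∃ s ∈ R, z = r + s * x := fun z => by
    obtain ⟨a, ha, b, hb, hz⟩ : z ∈ {z : ℝ | ∃ a ∈ A, ∃ b ∈ A, z = a + x * b} := h ▸ trivial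
    exact ⟨a, hAR ha, b, hAR hb, hz.trans (by ring)⟩
  obtain ⟨i, hi, hi0, hix⟩ := Subring.exists_ne_zero_mul_mem_of_forall_eq_add_mul hspan
  exact Subring.eq_top_of_forall_eq_add_mul hspan hi hi0 hix
end

section
/- If A is a subring of the field ℚ_p of p-adic numbers and there exists x ∈ ℚ_p such that A + x·A = ℚ_p, then A = ℚ_p. -/
/-!
Every `z ∈ ℚ_[p]` satisfies a monic quadratic over `A` (the characteristic polynomial of
multiplication by `z` on `A + x·A`), so `A` is a subfield over which `ℚ_[p]` has degree at most `2`.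
A quadratic extension in characteristic zero is Galois, hence has a nontrivial automorphism.
But `ℚ_[p]` has no nontrivial ring endomorphism: by Hensel's lemma, `ℤ_[p]` is the set of `z`
for which `1 + p z^(p+1)` is a `(p+1)`-st power, so every endomorphism `σ` preserves `ℤ_[p]`,
is therefore `1`-Lipschitz, and fixes the dense subfield `ℚ`.
-/

open Module

section

variable {K : Type*} [Field K]

theorem Subfield.finrank_ne_two_of_ringEquiv_eq_refl [CharZero K]
    (hK : ∀ σ : K ≃+* K, σ = RingEquiv.refl K) (F : Subfield K) : finrank F K ≠ 2 := by
  intro h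
  have : FiniteDimensional F K := .of_finrank_pos (by omega)
  have : Algebra.IsQuadraticExtension F K := ⟨h⟩
  have hcard : 1 < Nat.card Gal(K/F) := by
    rw [IsGalois.card_aut_eq_finrank, h]; norm_num
  have := Finite.one_lt_card_iff_nontrivial.mp hcard
  obtain ⟨σ, hσ⟩ := exists_ne (1 : Gal(K/F))
  exact hσ (AlgEquiv.ext fun z => RingEquiv.congr_fun (hK σ.toRingEquiv) z)

namespace Subring

variable {A : Subring K} {x : K}

theorem exists_mul_self_eq_sub (h : ∀ z, ∃ a ∈ A, ∃ b ∈ A, z = a + x * b) (z : K) :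
    ∃ t ∈ A, ∃ d ∈ A, z * z = t * z - d := by
  obtain ⟨a₁, ha₁, b₁, hb₁, hz⟩ := h z
  obtain ⟨a₂, ha₂, b₂, hb₂, hzx⟩ := h (z * x)
  exact ⟨a₁ + b₂, add_mem ha₁ hb₂, a₁ * b₂ - b₁ * a₂,
    sub_mem (mul_mem ha₁ hb₂) (mul_mem hb₁ ha₂),
    by linear_combination (z - b₂) * hz + b₁ * hzx⟩

theorem inv_mem_of_forall_eq_add_mul (h : ∀ z, ∃ a ∈ A, ∃ b ∈ A, z = a + x * b) {a : K}
    (ha : a ∈ A) : a⁻¹ ∈ A := by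
  rcases eq_or_ne a 0 with rfl | ha₀
  · simp [A.zero_mem]
  obtain ⟨t, ht, d, hd, hrel⟩ := exists_mul_self_eq_sub h a⁻¹
  have : a⁻¹ = t - d * a := by
    field_simp at hrel ⊢
    linear_combination hrel
  rw [this]
  exact sub_mem ht (mul_mem hd ha)

theorem eq_top_of_forall_eq_add_mul_s14 [CharZero K] (hK : ∀ σ : K ≃+* K, σ = RingEquiv.refl K)
    (h : ∀ z, ∃ a ∈ A, ∃ b ∈ A, z = a + x * b) : A = ⊤ := by
  classical
  set F := A.toSubfield fun _ => inv_mem_of_forall_eq_add_mul h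
  have hspan : Submodule.span F (↑({1, x} : Finset K) : Set K) = ⊤ := by
    refine eq_top_iff.mpr fun z _ => ?_
    rw [Finset.coe_pair, Submodule.mem_span_pair]
    obtain ⟨a, ha, b, hb, rfl⟩ := h z
    exact ⟨⟨a, ha⟩, ⟨b, hb⟩, by simp [Subfield.smul_def, mul_comm]⟩
  have : FiniteDimensional F K := ⟨⟨_, hspan⟩⟩
  have hle : finrank F K ≤ 2 := by
    have := (finrank_span_finset_le_card (R := F) {1, x}).trans Finset.card_le_two
    rwa [Set.finrank, hspan, finrank_top] at this
  have hone : finrank F K = 1 := by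
    have := Subfield.finrank_ne_two_of_ringEquiv_eq_refl hK F
    have := finrank_pos (R := F) (M := K)
    omega
  refine eq_top_iff.mpr fun z _ => ?_
  obtain ⟨a, rfl⟩ := Algebra.mem_bot.mp
    (Subalgebra.bot_eq_top_of_finrank_eq_one hone ▸ Algebra.mem_top (x := z))
  exact a.2

end Subring

end

section

variable {p : ℕ} [Fact p.Prime]

open Polynomial in
theorem PadicInt.exists_pow_eq_of_norm_sub_one_lt {n : ℕ} (hn : p.Coprime n) {u : ℤ_[p]}
    (hu : ‖u - 1‖ < 1) : ∃ y : ℤ_[p], y ^ n = u := by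
  have hnorm : ‖(X ^ n - C u).aeval (1 : ℤ_[p])‖ <
      ‖(X ^ n - C u).derivative.aeval (1 : ℤ_[p])‖ ^ 2 := by
    simpa [norm_sub_rev, derivative_X_pow, PadicInt.norm_natCast_eq_one_iff.mpr hn] using hu
  obtain ⟨y, hy, -⟩ := hensels_lemma hnorm
  exact ⟨y, by simpa [sub_eq_zero] using hy⟩

namespace Padic

theorem valuation_add_eq_of_lt {x y : ℚ_[p]} (hx : x ≠ 0) (hxy : x.valuation < y.valuation) :
    (x + y).valuation = x.valuation := by
  rcases eq_or_ne y 0 with rfl | hy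
  · rw [add_zero]
  have hlt : mulValuation y < mulValuation x := by simpa [hx, hy, inv_lt_inv₀] using hxy
  have hsum := mulValuation.map_add_eq_of_lt_left hlt
  have hne : x + y ≠ 0 := fun h0 => by simpa [h0, hx] using hsum.symm
  simpa [hx, hne] using hsum

theorem norm_le_one_iff_exists_pow_eq (z : ℚ_[p]) :
    ‖z‖ ≤ 1 ↔ ∃ y : ℚ_[p], y ^ (p + 1) = 1 + p * z ^ (p + 1) := by
  have hp := (Fact.out : p.Prime)
  constructor
  · intro hz
    obtain ⟨w, rfl⟩ : ∃ w : ℤ_[p], (w : ℚ_[p]) = z := ⟨⟨z, hz⟩, rfl⟩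
    have hu : ‖(1 + p * w ^ (p + 1) : ℤ_[p]) - 1‖ < 1 := by
      rw [add_sub_cancel_left, norm_mul, norm_pow]
      refine mul_lt_one_of_nonneg_of_lt_one_left (norm_nonneg _) ?_
        (pow_le_one₀ (norm_nonneg _) w.norm_le_one)
      rw [PadicInt.norm_p]
      exact inv_lt_one_of_one_lt₀ (mod_cast hp.one_lt)
    obtain ⟨y, hy⟩ := PadicInt.exists_pow_eq_of_norm_sub_one_lt
      (Nat.coprime_self_add_right.mpr (Nat.coprime_one_right p)) hu
    exact ⟨y, by simpa using congrArg ((↑) : ℤ_[p] → ℚ_[p]) hy⟩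
  · rintro ⟨y, hy⟩
    by_contra hz
    rw [norm_le_one_iff_val_nonneg, not_le] at hz
    have hz₀ : z ≠ 0 := by rintro rfl; simp at hz
    have hp₀ : (p : ℚ_[p]) ≠ 0 := Nat.cast_ne_zero.mpr hp.ne_zero
    have hpz : (p * z ^ (p + 1) : ℚ_[p]).valuation = 1 + (p + 1) * z.valuation := by
      rw [valuation_mul hp₀ (pow_ne_zero _ hz₀), valuation_p, valuation_pow]
      push_cast; ring
    have hsum : (1 + p * z ^ (p + 1) : ℚ_[p]).valuation = 1 + (p + 1) * z.valuation := by
      have hlt : (p * z ^ (p + 1) : ℚ_[p]).valuation < (1 : ℚ_[p]).valuation := by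
        rw [hpz, valuation_one]; nlinarith [hp.two_le]
      rw [add_comm, valuation_add_eq_of_lt (mul_ne_zero hp₀ (pow_ne_zero _ hz₀)) hlt, hpz]
    rw [← hy, valuation_pow] at hsum
    have : ((p : ℤ) + 1) * (y.valuation - z.valuation) = 1 := by push_cast at hsum; linarith
    have := Int.eq_one_of_mul_eq_one_right (by positivity) this
    have := hp.pos
    omega

theorem norm_map_le_one_of_norm_le_one (σ : ℚ_[p] →+* ℚ_[p]) {z : ℚ_[p]} (hz : ‖z‖ ≤ 1) :
    ‖σ z‖ ≤ 1 := by
  obtain ⟨y, hy⟩ := (norm_le_one_iff_exists_pow_eq z).mp hz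
  exact (norm_le_one_iff_exists_pow_eq (σ z)).mpr ⟨σ y, by simp [← map_pow, hy]⟩

theorem norm_map_le (σ : ℚ_[p] →+* ℚ_[p]) (z : ℚ_[p]) : ‖σ z‖ ≤ ‖z‖ := by
  rcases eq_or_ne z 0 with rfl | hz
  · simp
  have hpv : ‖(p : ℚ_[p]) ^ z.valuation‖ = ‖z‖ := by
    rw [norm_p_zpow, norm_eq_zpow_neg_valuation hz]
  have hunit : ‖z / (p : ℚ_[p]) ^ z.valuation‖ ≤ 1 := by
    rw [norm_div, hpv, div_self (norm_ne_zero_iff.mpr hz)]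
  have := norm_map_le_one_of_norm_le_one σ hunit
  rwa [map_div₀, map_zpow₀, map_natCast, norm_div, hpv,
    div_le_one (norm_pos_iff.mpr hz)] at this

theorem ringHom_eq_id (σ : ℚ_[p] →+* ℚ_[p]) : σ = RingHom.id ℚ_[p] := by
  have hσ : Continuous σ :=
    AddMonoidHomClass.continuous_of_bound σ 1 fun z => by simpa using norm_map_le σ z
  exact RingHom.ext (congrFun ((denseRange_ratCast p).equalizer hσ continuous_id
    (funext (map_ratCast σ))))

end Padic

end

theorem stmt_14 (p : ℕ) [Fact p.Prime] (A : Subring ℚ_[p]) (x : ℚ_[p])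
    (h : {z : ℚ_[p] | ∃ a ∈ A, ∃ b ∈ A, z = a + x * b} = Set.univ) :
    A = ⊤ :=
  Subring.eq_top_of_forall_eq_add_mul_s14
    (fun σ => RingEquiv.ext (RingHom.congr_fun (Padic.ringHom_eq_id σ.toRingHom)))
    (Set.eq_univ_iff_forall.mp h)
end

section
/- If F is a subfield of ℚ_p such that the extension ℚ_p/F is finite, then F = ℚ_p. -/
/-!
A multiplicative map `φ : ℚ_[p] → ℚ_[p]` with `φ p = p ^ n` satisfies `‖φ y‖ = ‖y‖ ^ n`: for a
unit `u`, Fermat and Hensel make `u ^ (p - 1)` an `m`-th power for every `m` prime to `p`, so the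
valuation of `φ u ^ (p - 1)` is divisible by all such `m` and vanishes. Applied to the norm of
`ℚ_[p]` over `F`, this gives `‖f a‖ = ‖a - x‖ ^ d` for the minimal polynomial `f` of degree `d` of
any `x ∉ F` and every `a ∈ F`. Writing `f = (X - x) q`, we get `‖q a‖ = ‖a - x‖ ^ (d - 1)` on the
dense set `F ⊇ ℚ`, so `q x = 0` if `d ≥ 2`, contradicting the separability of `f`.
-/

open Polynomial IntermediateField

namespace PadicInt

variable {p : ℕ} [hp : Fact p.Prime]

lemma norm_lt_one_iff_toZMod_eq_zero (x : ℤ_[p]) : ‖x‖ < 1 ↔ toZMod x = 0 := by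
  rw [← RingHom.mem_ker, ker_toZMod, IsLocalRing.mem_maximalIdeal, mem_nonunits]

lemma norm_pow_sub_one_sub_one_lt {u : ℤ_[p]} (hu : ‖u‖ = 1) : ‖u ^ (p - 1) - 1‖ < 1 := by
  have hu0 : toZMod u ≠ 0 := by
    rw [ne_eq, ← norm_lt_one_iff_toZMod_eq_zero, hu]
    exact lt_irrefl 1
  rw [norm_lt_one_iff_toZMod_eq_zero, map_sub, map_pow, map_one,
    ZMod.pow_card_sub_one_eq_one hu0, sub_self]

lemma exists_pow_eq_of_norm_sub_one_lt_s15 {m : ℕ} (hm : ¬p ∣ m) {c : ℤ_[p]} (hc : ‖c - 1‖ < 1) :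
    ∃ z : ℤ_[p], z ^ m = c := by
  have hm1 : ‖(m : ℤ_[p])‖ = 1 :=
    norm_natCast_eq_one_iff.mpr (hp.out.coprime_iff_not_dvd.mpr hm)
  obtain ⟨z, hz, -⟩ := hensels_lemma (p := p) (R := ℤ_[p]) (F := X ^ m - C c) (a := 1)
    (by simpa [norm_sub_rev, derivative_X_pow, hm1] using hc)
  exact ⟨z, sub_eq_zero.mp (by simpa using hz)⟩

end PadicInt

namespace Padic

variable {p : ℕ} [hp : Fact p.Prime]

lemma exists_pow_eq_pow_sub_one {u : ℚ_[p]} (hu : ‖u‖ = 1) {m : ℕ} (hm : ¬p ∣ m) :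
    ∃ y : ℚ_[p], y ^ m = u ^ (p - 1) := by
  obtain ⟨u, rfl⟩ : ∃ u' : ℤ_[p], (u' : ℚ_[p]) = u := ⟨⟨u, hu.le⟩, rfl⟩
  obtain ⟨z, hz⟩ := PadicInt.exists_pow_eq_of_norm_sub_one_lt_s15 hm
    (PadicInt.norm_pow_sub_one_sub_one_lt hu)
  exact ⟨z, by rw [← PadicInt.coe_pow, hz, PadicInt.coe_pow]⟩

lemma norm_eq_one_of_forall_exists_pow_eq {t : ℚ_[p]} (ht : t ≠ 0)
    (h : ∀ m : ℕ, ¬p ∣ m → ∃ s : ℚ_[p], s ^ m = t) : ‖t‖ = 1 := by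
  suffices t.valuation = 0 by simp [norm_eq_zpow_neg_valuation ht, this]
  set m := p * t.valuation.natAbs + 1
  have hpm : ¬p ∣ m := by
    rw [Nat.dvd_add_right (dvd_mul_right _ _), Nat.dvd_one]
    exact hp.out.one_lt.ne'
  obtain ⟨s, hs⟩ := h m hpm
  have hdvd : (m : ℤ) ∣ t.valuation := ⟨s.valuation, by rw [← hs, valuation_pow]⟩
  refine Int.eq_zero_of_dvd_of_natAbs_lt_natAbs hdvd ?_
  rw [Int.natAbs_natCast]
  exact Nat.lt_succ_of_le (Nat.le_mul_of_pos_left _ hp.out.pos)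

lemma norm_map_eq_one (φ : ℚ_[p] →*₀ ℚ_[p]) {u : ℚ_[p]} (hu : ‖u‖ = 1) : ‖φ u‖ = 1 := by
  have hu0 : u ≠ 0 := norm_ne_zero_iff.mp (by simp [hu])
  have h : ‖φ u ^ (p - 1)‖ = 1 := by
    refine norm_eq_one_of_forall_exists_pow_eq (pow_ne_zero _ ((map_ne_zero φ).mpr hu0)) ?_
    intro m hm
    obtain ⟨y, hy⟩ := exists_pow_eq_pow_sub_one hu hm
    exact ⟨φ y, by rw [← map_pow, hy, map_pow]⟩
  rwa [norm_pow, pow_eq_one_iff_of_nonneg (norm_nonneg _)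
    (Nat.sub_ne_zero_of_lt hp.out.one_lt)] at h

lemma norm_map_eq_norm_pow (φ : ℚ_[p] →*₀ ℚ_[p]) {n : ℕ} (hφ : φ p = p ^ n) {y : ℚ_[p]}
    (hy : y ≠ 0) : ‖φ y‖ = ‖y‖ ^ n := by
  set v := y.valuation
  have hpv : ‖(p : ℚ_[p]) ^ v‖ = ‖y‖ := by rw [norm_p_zpow, norm_eq_zpow_neg_valuation hy]
  have hpv0 : (p : ℚ_[p]) ^ v ≠ 0 := zpow_ne_zero _ (by exact_mod_cast hp.out.ne_zero)
  have hu : ‖y / p ^ v‖ = 1 := by rw [norm_div, hpv, div_self (norm_ne_zero_iff.mpr hy)]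
  calc ‖φ y‖ = ‖φ (y / p ^ v) * φ p ^ v‖ := by
        rw [← map_zpow₀, ← map_mul, div_mul_cancel₀ _ hpv0]
    _ = ‖(p : ℚ_[p]) ^ v‖ ^ n := by
      rw [norm_mul, norm_map_eq_one φ hu, one_mul, hφ, ← zpow_natCast, ← zpow_mul, mul_comm,
        zpow_mul, zpow_natCast, norm_pow]
    _ = ‖y‖ ^ n := by rw [hpv]

variable (K : Type*) [Field K] [Algebra K ℚ_[p]] [FiniteDimensional K ℚ_[p]]

lemma norm_algebraMap_norm (y : ℚ_[p]) :
    ‖algebraMap K ℚ_[p] (Algebra.norm K y)‖ = ‖y‖ ^ Module.finrank K ℚ_[p] := by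
  rcases eq_or_ne y 0 with rfl | hy
  · simp [Module.finrank_pos.ne']
  let φ : ℚ_[p] →*₀ ℚ_[p] :=
    { (algebraMap K ℚ_[p] : K →* ℚ_[p]).comp (Algebra.norm K) with map_zero' := by simp }
  refine norm_map_eq_norm_pow φ ?_ hy
  show algebraMap K ℚ_[p] (Algebra.norm K (p : ℚ_[p])) = p ^ Module.finrank K ℚ_[p]
  rw [← map_natCast (algebraMap K ℚ_[p]), Algebra.norm_algebraMap, map_pow]

lemma norm_algebraMap_minpoly_coeff_zero (y : ℚ_[p]) :
    ‖algebraMap K ℚ_[p] ((minpoly K y).coeff 0)‖ = ‖y‖ ^ (minpoly K y).natDegree := by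
  have hy := IsIntegral.of_finite K y
  have h := norm_algebraMap_norm K y
  rw [Algebra.norm_eq_norm_adjoin, ← adjoin.powerBasis_gen hy,
    Algebra.PowerBasis.norm_gen_eq_coeff_zero_minpoly, adjoin.powerBasis_gen hy,
    minpoly_gen, ← Module.finrank_mul_finrank K K⟮y⟯ ℚ_[p],
    adjoin.finrank hy, pow_mul, map_pow, norm_pow, map_mul, norm_mul] at h
  have : Module.finrank K⟮y⟯ ℚ_[p] ≠ 0 := Module.finrank_pos.ne'
  simpa using (pow_left_inj₀ (by positivity) (by positivity) this).mp h

lemma norm_algebraMap_minpoly_eval (x : ℚ_[p]) (a : K) :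
    ‖algebraMap K ℚ_[p] ((minpoly K x).eval a)‖ =
      ‖algebraMap K ℚ_[p] a - x‖ ^ (minpoly K x).natDegree := by
  have h := norm_algebraMap_minpoly_coeff_zero K (x - algebraMap K ℚ_[p] a)
  rwa [minpoly.sub_algebraMap, natDegree_comp, natDegree_X_add_C, mul_one,
    coeff_zero_eq_eval_zero, eval_comp, eval_add, eval_X, eval_C, zero_add, norm_sub_rev] at h

end Padic

theorem Polynomial.Separable.le_one_of_norm_eval_eq_norm_sub_pow {𝕜 : Type*} [NormedField 𝕜]
    {g : 𝕜[X]} (hg : g.Separable) {x : 𝕜} (hx : g.IsRoot x) {S : Set 𝕜} (hS : Dense S)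
    (hxS : x ∉ S) {d : ℕ} (h : ∀ y ∈ S, ‖g.eval y‖ = ‖y - x‖ ^ d) : d ≤ 1 := by
  by_contra! hd
  set q := g /ₘ (X - C x)
  have hgq : (X - C x) * q = g := mul_divByMonic_eq_iff_isRoot.mpr hx
  have hq : ∀ y ∈ S, ‖q.eval y‖ = ‖y - x‖ ^ (d - 1) := by
    intro y hy
    have hyx : ‖y - x‖ ≠ 0 :=
      norm_ne_zero_iff.mpr (sub_ne_zero.mpr (ne_of_mem_of_not_mem hy hxS))
    apply mul_left_cancel₀ hyx
    rw [← norm_mul, ← pow_succ', Nat.sub_add_cancel hd.le, ← h y hy, ← hgq]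
    simp
  have hqx : q.eval x = 0 := by
    have := congrFun (Continuous.ext_on hS (by fun_prop) (by fun_prop) hq) x
    simpa [zero_pow (Nat.sub_ne_zero_of_lt hd)] using this
  have hsq : (X - C x) * (X - C x) ∣ g := by
    rw [← hgq]
    exact mul_dvd_mul_left _ (dvd_iff_isRoot.mpr hqx)
  exact not_isUnit_X_sub_C x (hg.squarefree _ hsq)

theorem stmt_15 (p : ℕ) [Fact p.Prime] (F : Subfield ℚ_[p])
    (h : Module.Finite F ℚ_[p]) : F = ⊤ := by
  by_contra hF
  obtain ⟨x, hx⟩ : ∃ x, x ∉ F := by simpa [eq_top_iff, SetLike.le_def] using hF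
  have hx_int := IsIntegral.of_finite F x
  have hdeg : 2 ≤ (minpoly F x).natDegree := by
    by_contra! hlt
    obtain ⟨a, ha⟩ := minpoly.natDegree_eq_one_iff.mp
      (by linarith [minpoly.natDegree_pos hx_int] : (minpoly F x).natDegree = 1)
    exact hx (ha ▸ a.2)
  have hdense : Dense (F : Set ℚ_[p]) :=
    (Padic.denseRange_ratCast p).mono (Set.range_subset_iff.mpr (SubfieldClass.ratCast_mem F))
  have hnorm : ∀ y ∈ (F : Set ℚ_[p]),
      ‖((minpoly F x).map (algebraMap F ℚ_[p])).eval y‖ = ‖y - x‖ ^ (minpoly F x).natDegree := by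
    intro y hy
    lift y to F using hy
    rw [eval_map_algebraMap]
    exact (congrArg norm (aeval_algebraMap_apply_eq_algebraMap_eval y _)).trans
      (Padic.norm_algebraMap_minpoly_eval F x y)
  have := ((minpoly.irreducible hx_int).separable.map).le_one_of_norm_eval_eq_norm_sub_pow
    (by simp) hdense hx hnorm
  omega
end

section
/- Let F be a subfield of ℝ and x ∈ ℝ \ F such that F is a maximal subfield avoiding x (i.e., every subfield strictly containing F contains x). Then the extension ℝ/F is algebraic, i.e., every real number is algebraic over F. -/
/-!
If `x` were transcendental over `F`, then `x ∉ F(x²)`, since `x q(x²) - p(x²)` has odd degree;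
as `x² ∉ F`, this contradicts maximality. So `x` is algebraic over `F`. For `y ∉ F` we have
`x ∈ F(y) \ F`, so writing `x = p(y) / q(y)` shows that `y` is algebraic over `F(x)`, hence over `F`.
-/

open Polynomial IntermediateField

namespace Subfield

variable {L : Type*} [Field L] (F : Subfield L)

theorem range_algebraMap : Set.range (algebraMap F L) = F :=
  Subtype.range_coe

theorem adjoin_simple_toSubfield (y : L) : (F⟮y⟯).toSubfield = closure ((F : Set L) ∪ {y}) := by
  rw [adjoin_toSubfield, range_algebraMap]

theorem mem_bot_iff {x : L} : x ∈ (⊥ : IntermediateField F L) ↔ x ∈ F := by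
  rw [mem_bot, range_algebraMap, SetLike.mem_coe]

end Subfield

namespace IntermediateField

variable {K L : Type*} [Field K] [Field L] [Algebra K L]

theorem isAlgebraic_of_mem_adjoin_simple {x y : L} (hx : x ∉ (⊥ : IntermediateField K L))
    (hxy : x ∈ K⟮y⟯) : IsAlgebraic K⟮x⟯ y := by
  obtain ⟨p, q, hpq⟩ := (mem_adjoin_simple_iff K x).mp hxy
  have hqy : aeval y q ≠ 0 := by
    rintro hq
    rw [hq, div_zero] at hpq
    exact hx (hpq ▸ zero_mem _)
  have hq : q ≠ 0 := by rintro rfl; simp at hqy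
  set x' : K⟮x⟯ := ⟨x, mem_adjoin_simple_self K x⟩
  refine ⟨p.map (algebraMap K K⟮x⟯) - C x' * q.map (algebraMap K K⟮x⟯), ?_, ?_⟩
  · -- otherwise comparing the coefficients of degree `natDegree q` puts `x` in `K`
    rw [Ne, sub_eq_zero]
    intro h
    have hc := congrArg (coeff · q.natDegree) h
    simp only [coeff_map, coeff_C_mul] at hc
    apply hx
    refine ⟨p.coeff q.natDegree / q.coeff q.natDegree, ?_⟩
    have hlc : algebraMap K L (q.coeff q.natDegree) ≠ 0 := by simpa using hq
    show algebraMap K L _ = x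
    rw [map_div₀, div_eq_iff hlc]
    simpa [x'] using congrArg (algebraMap K⟮x⟯ L) hc
  · rw [map_sub, map_mul, aeval_C, aeval_map_algebraMap, aeval_map_algebraMap,
      show algebraMap K⟮x⟯ L x' = x from rfl, (eq_div_iff hqy).mp hpq, sub_self]

theorem isAlgebraic_of_mem_adjoin_simple_of_isAlgebraic {x y : L}
    (hx : x ∉ (⊥ : IntermediateField K L)) (halg : IsAlgebraic K x) (hxy : x ∈ K⟮y⟯) :
    IsAlgebraic K y :=
  have := isAlgebraic_adjoin_simple halg.isIntegral
  (isAlgebraic_of_mem_adjoin_simple hx hxy).restrictScalars K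

theorem notMem_adjoin_sq_of_transcendental {x : L} (hx : Transcendental K x) :
    x ∉ K⟮x ^ 2⟯ := by
  intro hmem
  obtain ⟨p, q, hpq⟩ := (mem_adjoin_simple_iff K x).mp hmem
  have hq : aeval (x ^ 2) q ≠ 0 := by
    rintro h0
    rw [h0, div_zero] at hpq
    exact hx (hpq ▸ isAlgebraic_zero)
  have hroot : aeval x (X * expand K 2 q - expand K 2 p) = 0 := by
    rw [map_sub, map_mul, aeval_X, expand_aeval, expand_aeval, (eq_div_iff hq).mp hpq, sub_self]
  have hzero : X * expand K 2 q = expand K 2 p :=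
    sub_eq_zero.mp (by_contra fun h ↦ hx ⟨_, h, hroot⟩)
  have hq0 : expand K 2 q ≠ 0 := (expand_ne_zero two_pos).mpr (by rintro rfl; simp at hq)
  have hdeg := congrArg natDegree hzero
  rw [natDegree_X_mul hq0, natDegree_expand, natDegree_expand] at hdeg
  omega

end IntermediateField

theorem stmt_16 (F : Subfield ℝ) (x : ℝ) (hx : x ∉ F)
    (hmax : ∀ y : ℝ, y ∉ F → x ∈ Subfield.closure ((F : Set ℝ) ∪ {y})) :
    ∀ y : ℝ, IsAlgebraic F y := by
  have hmem_adjoin (y : ℝ) (hy : y ∉ F) : x ∈ F⟮y⟯ := by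
    rw [← mem_toSubfield, F.adjoin_simple_toSubfield]
    exact hmax y hy
  have halg : IsAlgebraic F x := by
    by_contra ht
    have hsq : x ^ 2 ∉ F := fun h ↦ Transcendental.pow ht two_pos (isAlgebraic_algebraMap (⟨_, h⟩ : F))
    exact notMem_adjoin_sq_of_transcendental ht (hmem_adjoin _ hsq)
  intro y
  by_cases hy : y ∈ F
  · exact isAlgebraic_algebraMap (⟨y, hy⟩ : F)
  · exact isAlgebraic_of_mem_adjoin_simple_of_isAlgebraic (mt F.mem_bot_iff.mp hx) halg
      (hmem_adjoin y hy)
end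

section
/- If A = ⋃_{n≥1} A_n is an F_σ subset of ℝ with each A_n compact and A has Lebesgue measure zero and A is an additive subgroup of ℝ, then the set {x ∈ ℝ : μ(A + x·A) = 0} is comeager in ℝ; in particular there exists an irrational x such that A + x·A is Lebesgue null. -/
/-!
For rational `q` with denominator `n`, the group property gives `A + q • A ⊆ n⁻¹ • A`, a null set.
Write `A + x • A` as the countable union of the images of the compacta `C i ×ˢ C j` under
`(a, b) ↦ a + x * b`. By outer regularity and compactness, `x ↦ μ (C i + x • C j)` is upper
semicontinuous, so its zero set is a `Gδ`; it contains `ℚ`, hence is comeager. A countable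
intersection of comeager sets is comeager and meets the comeager set of irrationals.
-/

open MeasureTheory Set Filter Topology
open scoped ENNReal Pointwise

theorem UpperSemicontinuous.isGδ_setOf_eq_zero {X : Type*} [TopologicalSpace X] {g : X → ℝ≥0∞}
    (hg : UpperSemicontinuous g) : IsGδ {x | g x = 0} := by
  have : {x | g x = 0} = ⋂ n : ℕ, g ⁻¹' Iio (n : ℝ≥0∞)⁻¹ := by
    ext x
    simp only [mem_ofPred_eq, mem_iInter, mem_preimage, mem_Iio]
    refine ⟨fun h n => h ▸ ENNReal.inv_pos.2 (ENNReal.natCast_ne_top n), fun h => ?_⟩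
    by_contra hx
    obtain ⟨n, hn⟩ := ENNReal.exists_inv_nat_lt hx
    exact (h n).not_gt hn
  rw [this]
  exact .iInter fun n => (hg.isOpen_preimage _).isGδ

theorem upperSemicontinuous_measure_image_of_isCompact {X Y Z : Type*} [TopologicalSpace X]
    [TopologicalSpace Y] [TopologicalSpace Z] [MeasurableSpace Z] (μ : Measure Z) [μ.OuterRegular]
    {f : X → Y → Z} (hf : Continuous ↿f) {K : Set Y} (hK : IsCompact K) :
    UpperSemicontinuous fun x => μ (f x '' K) := by
  intro x₀ r hr
  obtain ⟨V, hKV, hV, hμV⟩ := (f x₀ '' K).exists_isOpen_lt_of_lt r hr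
  have hmaps : ∀ᶠ x in 𝓝 x₀, ∀ y ∈ K, f x y ∈ V :=
    hK.eventually_forall_of_forall_eventually fun y hy =>
      hf.continuousAt.preimage_mem_nhds (hV.mem_nhds (hKV (mem_image_of_mem _ hy)))
  filter_upwards [hmaps] with x hx
  exact (measure_mono (image_subset_iff.2 hx)).trans_lt hμV

theorem residual_setOf_measure_image_iUnion_eq_zero {X Y Z ι : Type*} [TopologicalSpace X]
    [BaireSpace X] [TopologicalSpace Y] [TopologicalSpace Z] [MeasurableSpace Z] (μ : Measure Z)
    [μ.OuterRegular] [Countable ι] {f : X → Y → Z} (hf : Continuous ↿f) {K : ι → Set Y}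
    (hK : ∀ i, IsCompact (K i)) {D : Set X} (hD : Dense D)
    (hD0 : ∀ x ∈ D, μ (f x '' ⋃ i, K i) = 0) :
    {x | μ (f x '' ⋃ i, K i) = 0} ∈ residual X := by
  simp only [image_iUnion, measure_iUnion_null_iff, ofPred_forall]
  refine countable_iInter_mem.2 fun i => residual_of_dense_Gδ
    (upperSemicontinuous_measure_image_of_isCompact μ hf (hK i)).isGδ_setOf_eq_zero
    (hD.mono fun x hx => ?_)
  exact measure_mono_null (image_mono (subset_iUnion K i)) (hD0 x hx)

theorem setOf_exists_add_mul_eq (A : Set ℝ) (x : ℝ) :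
    {z : ℝ | ∃ a ∈ A, ∃ b ∈ A, z = a + x * b} = (fun p : ℝ × ℝ => p.1 + x * p.2) '' A ×ˢ A := by
  ext z
  simp [and_assoc, eq_comm]

theorem AddSubgroup.image_add_rat_mul_subset (A : AddSubgroup ℝ) (q : ℚ) :
    (fun p : ℝ × ℝ => p.1 + q * p.2) '' (A : Set ℝ) ×ˢ A ⊆ (q.den : ℝ)⁻¹ • (A : Set ℝ) := by
  rintro _ ⟨⟨a, b⟩, ⟨ha, hb⟩, rfl⟩
  refine ⟨q.den • a + q.num • b, A.add_mem (A.nsmul_mem ha _) (A.zsmul_mem hb _), ?_⟩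
  have hden : (q.den : ℝ) ≠ 0 := by exact_mod_cast q.den_nz
  simp only [nsmul_eq_mul, zsmul_eq_mul, smul_eq_mul, Rat.cast_def]
  field_simp

theorem AddSubgroup.volume_image_add_rat_mul_eq_zero {A : AddSubgroup ℝ}
    (hA : volume (A : Set ℝ) = 0) (q : ℚ) :
    volume ((fun p : ℝ × ℝ => p.1 + q * p.2) '' (A : Set ℝ) ×ˢ A) = 0 :=
  measure_mono_null (A.image_add_rat_mul_subset q) (by simp [Measure.addHaar_smul, hA])

theorem stmt_19 (A : AddSubgroup ℝ) (C : ℕ → Set ℝ)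
    (hC : ∀ n, IsCompact (C n)) (hA : (A : Set ℝ) = ⋃ n, C n)
    (hnull : MeasureTheory.volume (A : Set ℝ) = 0) :
    {x : ℝ | MeasureTheory.volume {z : ℝ | ∃ a ∈ A, ∃ b ∈ A, z = a + x * b} = 0}
        ∈ residual ℝ ∧
    ∃ x : ℝ, Irrational x ∧
      MeasureTheory.volume {z : ℝ | ∃ a ∈ A, ∃ b ∈ A, z = a + x * b} = 0 := by
  have hAA : (A : Set ℝ) ×ˢ A = ⋃ i : ℕ × ℕ, C i.1 ×ˢ C i.2 := by rw [iUnion_prod, hA]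
  have hres : {x : ℝ | volume {z : ℝ | ∃ a ∈ A, ∃ b ∈ A, z = a + x * b} = 0} ∈ residual ℝ := by
    have hS (x : ℝ) : {z : ℝ | ∃ a ∈ A, ∃ b ∈ A, z = a + x * b} =
        (fun p : ℝ × ℝ => p.1 + x * p.2) '' ⋃ i : ℕ × ℕ, C i.1 ×ˢ C i.2 :=
      hAA ▸ setOf_exists_add_mul_eq A x
    simp only [hS]
    refine residual_setOf_measure_image_iUnion_eq_zero volume
      (f := fun x p => p.1 + x * p.2) (by fun_prop) (fun i : ℕ × ℕ => (hC i.1).prod (hC i.2))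
      Rat.denseRange_cast ?_
    rintro _ ⟨q, rfl⟩
    rw [← hAA]
    exact A.volume_image_add_rat_mul_eq_zero hnull q
  obtain ⟨x, hirr, hx⟩ :=
    (dense_of_mem_residual (inter_mem eventually_residual_irrational hres)).nonempty
  exact ⟨hres, x, hirr, hx⟩
end
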